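/- arXiv:2002.09663 — 4 statements merged into one kernel-verified Lean document; each statement's English description precedes it below -/
import Mathlib

section
/- For cos α, cos β with α, β ∈ [0, π/2], if ‖l^ref‖·√(1 − A^ref/π) = ‖l‖·√(1 − A/π) where A^ref = π sin²α^ref and A = π sin²α are the areas of spherical isointensity circles at common intensity value v = ‖l^ref‖cos α^ref = ‖l‖cos α, then A^ref < A ↔ ‖l^ref‖ < ‖l‖, A^ref = A ↔ ‖l^ref‖ = ‖l‖, and A^ref > A ↔ ‖l^ref‖ > ‖l‖. -/
open Real

/-- The areas of the reference and current spherical isointensity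
circles at a common intensity value have the same magnitude relation as the
norms of the corresponding lighting vectors. -/
theorem stmt_2 (lref lcur αref α : ℝ)
    (hlref : 0 < lref) (hlcur : 0 < lcur)
    (hαref : αref ∈ Set.Ico 0 (π / 2)) (hα : α ∈ Set.Ico 0 (π / 2))
    (Aref A : ℝ)
    (hAref : Aref = π * Real.sin αref ^ 2) (hA : A = π * Real.sin α ^ 2)
    (hv : lref * Real.cos αref = lcur * Real.cos α)
    (heq : lref * Real.sqrt (1 - Aref / π) = lcur * Real.sqrt (1 - A / π)) :
    (Aref < A ↔ lref < lcur) ∧ (Aref = A ↔ lref = lcur) ∧ (A < Aref ↔ lcur < lref) := by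
  have hπ := Real.pi_pos
  have hc1 : 0 < Real.cos αref :=
    Real.cos_pos_of_mem_Ioo ⟨by linarith [hαref.1], hαref.2⟩
  have hc2 : 0 < Real.cos α :=
    Real.cos_pos_of_mem_Ioo ⟨by linarith [hα.1], hα.2⟩
  have hs1 : Real.sin αref ^ 2 = 1 - Real.cos αref ^ 2 := Real.sin_sq αref
  have hs2 : Real.sin α ^ 2 = 1 - Real.cos α ^ 2 := Real.sin_sq α
  have hcoslt : Real.cos α < Real.cos αref ↔ lref < lcur := by
    constructor
    · intro h
      by_contra h'
      push_neg at h'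
      nlinarith
    · intro h
      nlinarith
  have hcoslt' : Real.cos αref < Real.cos α ↔ lcur < lref := by
    constructor
    · intro h
      by_contra h'
      push_neg at h'
      nlinarith
    · intro h
      nlinarith
  have h1 : Aref < A ↔ lref < lcur := by
    rw [hAref, hA, mul_lt_mul_iff_right₀ hπ, hs1, hs2, ← hcoslt]
    constructor <;> intro h <;> nlinarith
  have h3 : A < Aref ↔ lcur < lref := by
    rw [hAref, hA, mul_lt_mul_iff_right₀ hπ, hs1, hs2, ← hcoslt']
    constructor <;> intro h <;> nlinarith
  refine ⟨h1, ⟨fun h => ?_, fun h => ?_⟩, h3⟩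
  · rcases lt_trichotomy lref lcur with hh | hh | hh
    · exact absurd (h1.2 hh) (by rw [h]; exact lt_irrefl _)
    · exact hh
    · exact absurd (h3.2 hh) (by rw [h]; exact lt_irrefl _)
  · rcases lt_trichotomy Aref A with hh | hh | hh
    · exact absurd (h1.1 hh) (by rw [h]; exact lt_irrefl _)
    · exact hh
    · exact absurd (h3.1 hh) (by rw [h]; exact lt_irrefl _)
end

section
/- Under the near point lighting model on the unit sphere, for a light source at position E ∉ S² outside the sphere and a lit point p (with ⟨N_p, E − X_p⟩ > 0), the intensity is B_p = e·cos γ_p / ‖E − X_p‖², where γ_p is the angle between the unit normal N_p and the lighting vector l_p = E − X_p, X_p the position of p, and e > 0 the lighting power. For two lit points p, q on the sphere: B_p = B_q if and only if γ_p = γ_q and ‖l_p‖ = ‖l_q‖. -/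
/-!
On the unit sphere everything is a function of `t = ⟪X, E⟫`: by the law of cosines
`‖E - X‖² = ‖E‖² + 1 - 2t` and `cos γ = (t - 1) / ‖E - X‖`, so the intensity is
`e (t - 1) / ‖E - X‖³`. As `t` grows the numerator grows and the distance shrinks, so the
intensity is strictly increasing in `t` on lit points. Equal intensities therefore force equal
`t`, hence equal distances and equal angles.
-/

open Real InnerProductGeometry
open scoped RealInnerProductSpace

/-- The paper's `B_p = e cos γ_p / ‖l_p‖²` with `l_p = E - X_p`; on the unit sphere the normal at
`X` is `X` itself. -/
noncomputable def nplIntensity {V : Type*} [NormedAddCommGroup V] [InnerProductSpace ℝ V]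
    (e : ℝ) (E X : V) : ℝ :=
  e * cos (angle X (E - X)) / ‖E - X‖ ^ 2

lemma div_pow_three_lt_div_pow_three {e t₁ t₂ r₁ r₂ : ℝ} (he : 0 < e) (h₁ : 1 < t₁)
    (ht : t₁ < t₂) (hr₁ : 0 ≤ r₁) (hr₂ : 0 < r₂) (hsq : r₁ ^ 2 - r₂ ^ 2 = 2 * (t₂ - t₁)) :
    e * (t₁ - 1) / r₁ ^ 3 < e * (t₂ - 1) / r₂ ^ 3 := by
  have hr : r₂ < r₁ := lt_of_pow_lt_pow_left₀ 2 hr₁ (by linarith)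
  exact div_lt_div₀ (by gcongr) (pow_le_pow_left₀ hr₂.le hr.le 3) (by nlinarith) (by positivity)

section UnitSphere

variable {V : Type*} [NormedAddCommGroup V] [InnerProductSpace ℝ V] {E X Y : V}

lemma inner_sub_self_of_norm_eq_one (hX : ‖X‖ = 1) : ⟪X, E - X⟫ = ⟪X, E⟫ - 1 := by
  rw [inner_sub_right, real_inner_self_eq_norm_sq, hX, one_pow]

lemma norm_sub_sq_of_norm_eq_one (hX : ‖X‖ = 1) :
    ‖E - X‖ ^ 2 = ‖E‖ ^ 2 + 1 - 2 * ⟪X, E⟫ := by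
  rw [norm_sub_sq_real, hX, real_inner_comm]
  ring

lemma cos_angle_sub_self_of_norm_eq_one (hX : ‖X‖ = 1) :
    cos (angle X (E - X)) = (⟪X, E⟫ - 1) / ‖E - X‖ := by
  rw [cos_angle, inner_sub_self_of_norm_eq_one hX, hX, one_mul]

lemma nplIntensity_eq (e : ℝ) (hX : ‖X‖ = 1) :
    nplIntensity e E X = e * (⟪X, E⟫ - 1) / ‖E - X‖ ^ 3 := by
  rw [nplIntensity, cos_angle_sub_self_of_norm_eq_one hX]
  ring

lemma nplIntensity_lt_of_inner_lt {e : ℝ} (he : 0 < e) (hX : ‖X‖ = 1) (hY : ‖Y‖ = 1)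
    (hlit : 0 < ⟪X, E - X⟫) (h : ⟪X, E⟫ < ⟪Y, E⟫) :
    nplIntensity e E X < nplIntensity e E Y := by
  rw [inner_sub_self_of_norm_eq_one hX] at hlit
  rw [nplIntensity_eq e hX, nplIntensity_eq e hY]
  refine div_pow_three_lt_div_pow_three he (by linarith) h (norm_nonneg _)
    (norm_pos_iff.mpr fun hEY ↦ ?_) ?_
  · obtain rfl : E = Y := sub_eq_zero.mp hEY
    have hXE := real_inner_le_norm X E
    rw [hX, hY, one_mul] at hXE
    linarith
  · rw [norm_sub_sq_of_norm_eq_one hX, norm_sub_sq_of_norm_eq_one hY]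
    ring

lemma inner_eq_of_nplIntensity_eq {e : ℝ} (he : 0 < e) (hX : ‖X‖ = 1) (hY : ‖Y‖ = 1)
    (hlitX : 0 < ⟪X, E - X⟫) (hlitY : 0 < ⟪Y, E - Y⟫)
    (h : nplIntensity e E X = nplIntensity e E Y) : ⟪X, E⟫ = ⟪Y, E⟫ := by
  rcases lt_trichotomy ⟪X, E⟫ ⟪Y, E⟫ with hlt | heq | hgt
  · exact absurd h (nplIntensity_lt_of_inner_lt he hX hY hlitX hlt).ne
  · exact heq
  · exact absurd h (nplIntensity_lt_of_inner_lt he hY hX hlitY hgt).ne'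

lemma norm_sub_eq_of_inner_eq (hX : ‖X‖ = 1) (hY : ‖Y‖ = 1) (h : ⟪X, E⟫ = ⟪Y, E⟫) :
    ‖E - X‖ = ‖E - Y‖ := by
  refine (pow_left_inj₀ (norm_nonneg _) (norm_nonneg _) two_ne_zero).mp ?_
  rw [norm_sub_sq_of_norm_eq_one hX, norm_sub_sq_of_norm_eq_one hY, h]

lemma angle_sub_self_eq_of_inner_eq (hX : ‖X‖ = 1) (hY : ‖Y‖ = 1) (h : ⟪X, E⟫ = ⟪Y, E⟫) :
    angle X (E - X) = angle Y (E - Y) := by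
  rw [angle, angle, inner_sub_self_of_norm_eq_one hX, inner_sub_self_of_norm_eq_one hY, hX, hY,
    h, norm_sub_eq_of_inner_eq hX hY h]

end UnitSphere

theorem stmt_9_general (e : ℝ) (he : 0 < e)
    (E Xp Xq : EuclideanSpace ℝ (Fin 3))
    (hXp : ‖Xp‖ = 1) (hXq : ‖Xq‖ = 1)
    (hlitp : 0 < (inner ℝ Xp (E - Xp) : ℝ)) (hlitq : 0 < (inner ℝ Xq (E - Xq) : ℝ))
    (γp γq Bp Bq : ℝ)
    (hγp : γp = InnerProductGeometry.angle Xp (E - Xp))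
    (hγq : γq = InnerProductGeometry.angle Xq (E - Xq))
    (hBp : Bp = e * Real.cos γp / ‖E - Xp‖ ^ 2)
    (hBq : Bq = e * Real.cos γq / ‖E - Xq‖ ^ 2) :
    Bp = Bq ↔ (γp = γq ∧ ‖E - Xp‖ = ‖E - Xq‖) := by
  subst hγp hγq hBp hBq
  change nplIntensity e E Xp = nplIntensity e E Xq ↔ _
  constructor
  · intro hB
    have ht := inner_eq_of_nplIntensity_eq he hXp hXq hlitp hlitq hB
    exact ⟨angle_sub_self_eq_of_inner_eq hXp hXq ht, norm_sub_eq_of_inner_eq hXp hXq ht⟩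
  · rintro ⟨hγ, hr⟩
    rw [nplIntensity, nplIntensity, hγ, hr]

/-- Under the near point lighting model on the unit sphere
(light at `E` with `‖E‖ > 1`, power `e > 0`), two lit points have equal
intensity `B = e·cos γ / ‖E − X‖²` iff both their angles `γ` (between the
normal and the lighting vector `E − X`) and their distances to the light
source agree. -/
theorem stmt_9 (e : ℝ) (he : 0 < e)
    (E Xp Xq : EuclideanSpace ℝ (Fin 3))
    (hE : 1 < ‖E‖) (hXp : ‖Xp‖ = 1) (hXq : ‖Xq‖ = 1)
    (hlitp : 0 < (inner ℝ Xp (E - Xp) : ℝ)) (hlitq : 0 < (inner ℝ Xq (E - Xq) : ℝ))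
    (γp γq Bp Bq : ℝ)
    (hγp : γp = InnerProductGeometry.angle Xp (E - Xp))
    (hγq : γq = InnerProductGeometry.angle Xq (E - Xq))
    (hBp : Bp = e * Real.cos γp / ‖E - Xp‖ ^ 2)
    (hBq : Bq = e * Real.cos γq / ‖E - Xq‖ ^ 2) :
    Bp = Bq ↔ (γp = γq ∧ ‖E - Xp‖ = ‖E - Xq‖) :=
  stmt_9_general e he E Xp Xq hXp hXq hlitp hlitq γp γq Bp Bq hγp hγq hBp hBq
end

section
/- Let f : [0, π] → ℝ be defined on the lit region {β : d cos β > 1} (for fixed d > 1, e > 0) by f(β) = e·(d cos β − 1)/(d² + 1 − 2d cos β)^{3/2}. Then f is strictly decreasing on this region. -/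
open Real Set

/-- The near-point-light intensity
`f β = e·(d cos β − 1)/(d² + 1 − 2d cos β)^{3/2}` is strictly decreasing
on the lit region `{β ∈ [0, π] : d cos β > 1}` for fixed `d > 1`, `e > 0`. -/
theorem stmt_18 (d e : ℝ) (hd : 1 < d) (he : 0 < e) :
    StrictAntiOn
      (fun β => e * (d * Real.cos β - 1) /
        (d ^ 2 + 1 - 2 * d * Real.cos β) ^ ((3 : ℝ) / 2))
      {β | β ∈ Set.Icc 0 π ∧ 1 < d * Real.cos β} := by
  intro x hx y hy hxy
  obtain ⟨⟨hx0, hxπ⟩, hxc⟩ := hx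
  obtain ⟨⟨hy0, hyπ⟩, hyc⟩ := hy
  have hcos : Real.cos y < Real.cos x :=
    Real.cos_lt_cos_of_nonneg_of_le_pi hx0 hyπ hxy
  have hcx1 : Real.cos x ≤ 1 := Real.cos_le_one x
  set u := Real.cos y with hu
  set v := Real.cos x with hv
  have hA : (0:ℝ) < d ^ 2 + 1 - 2 * d * v := by nlinarith
  have hB : (0:ℝ) < d ^ 2 + 1 - 2 * d * u := by nlinarith
  have hAB : d ^ 2 + 1 - 2 * d * v < d ^ 2 + 1 - 2 * d * u := by nlinarith
  have hrA : (d ^ 2 + 1 - 2 * d * v) ^ ((3:ℝ)/2) ≤ (d ^ 2 + 1 - 2 * d * u) ^ ((3:ℝ)/2) :=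
    le_of_lt (Real.rpow_lt_rpow (le_of_lt hA) hAB (by norm_num))
  have hrApos : 0 < (d ^ 2 + 1 - 2 * d * v) ^ ((3:ℝ)/2) := Real.rpow_pos_of_pos hA _
  have hnum : e * (d * u - 1) < e * (d * v - 1) := by nlinarith
  have hnum0 : 0 ≤ e * (d * v - 1) := by nlinarith
  exact div_lt_div₀ hnum hrA hnum0 hrApos
end

section
/- Let μ ∈ [1, 2) and consider the scalar ALR dynamics on the radial axis: position ρ_{t+1} = ρ_t + λ_t·sgn(ρ^ref − ρ_t), with λ_{t+1} = λ_t/2 if sgn(ρ^ref − ρ_{t+1}) ≠ sgn(ρ^ref − ρ_t) (a crossing), else λ_{t+1} = μ·λ_t, starting from λ_0 > 0 and ρ_0 ≠ ρ^ref. If crossings occur infinitely often, then λ_t → 0 and ρ_t → ρ^ref. -/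
open Filter

private lemma abs_step_aux (a l : ℝ) (ha : a ≠ 0) :
    |a - l * Real.sign a| = abs (|a| - l) := by
  rcases ha.lt_or_gt with h | h
  · rw [Real.sign_of_neg h, abs_of_neg h]
    have e1 : a - l * (-1) = -(-a - l) := by ring
    rw [e1, abs_neg]
  · rw [Real.sign_of_pos h, abs_of_pos h]
    ring_nf

private lemma cross_iff_aux (a l : ℝ) (ha : a ≠ 0)
    (hb : a - l * Real.sign a ≠ 0) :
    (Real.sign (a - l * Real.sign a) ≠ Real.sign a) ↔ |a| < l := by
  rcases ha.lt_or_gt with h | h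
  · rw [Real.sign_of_neg h] at hb ⊢
    have e1 : a - l * (-1) = a + l := by ring
    rw [e1] at hb ⊢
    rw [abs_of_neg h]
    constructor
    · intro hs
      rcases lt_trichotomy (a + l) 0 with h1 | h1 | h1
      · exact absurd (Real.sign_of_neg h1) hs
      · exact absurd h1 hb
      · linarith
    · intro h1
      rw [Real.sign_of_pos (by linarith : (0:ℝ) < a + l)]
      norm_num
  · rw [Real.sign_of_pos h] at hb ⊢
    have e1 : a - l * 1 = a - l := by ring
    rw [e1] at hb ⊢
    rw [abs_of_pos h]
    constructor
    · intro hs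
      rcases lt_trichotomy (a - l) 0 with h1 | h1 | h1
      · linarith
      · exact absurd h1 hb
      · exact absurd (Real.sign_of_pos h1) hs
    · intro h1
      rw [Real.sign_of_neg (by linarith : a - l < 0)]
      norm_num

/-- The one-dimensional progressive ALR dynamics with
bisection approaching: if sign crossings occur infinitely often and
`1 ≤ μ < 2`, then the adjustment magnitudes tend to 0 and the position
converges to the target `ρref`. -/
theorem stmt_19 (μ : ℝ) (hμ1 : 1 ≤ μ) (hμ2 : μ < 2)
    (ρref : ℝ) (ρ lam : ℕ → ℝ)
    (hlam0 : 0 < lam 0) (hρ0 : ρ 0 ≠ ρref)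
    (hρ : ∀ t, ρ (t + 1) = ρ t + lam t * Real.sign (ρref - ρ t))
    (hlam : ∀ t, lam (t + 1) =
      if Real.sign (ρref - ρ (t + 1)) ≠ Real.sign (ρref - ρ t)
      then lam t / 2 else μ * lam t)
    (hcross : ∀ n : ℕ, ∃ t ≥ n,
      Real.sign (ρref - ρ (t + 1)) ≠ Real.sign (ρref - ρ t)) :
    Tendsto lam atTop (nhds 0) ∧ Tendsto ρ atTop (nhds ρref) := by
  have lam_pos : ∀ t, 0 < lam t := by
    intro t
    induction t with
    | zero => exact hlam0
    | succ n ih =>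
      rw [hlam n]
      split
      · linarith
      · nlinarith
  have hstep : ∀ t, ρref - ρ (t + 1) =
      (ρref - ρ t) - lam t * Real.sign (ρref - ρ t) := by
    intro t; rw [hρ t]; ring
  have hne : ∀ t, ρref - ρ t ≠ 0 := by
    by_contra hcon
    push_neg at hcon
    obtain ⟨T, hT⟩ := hcon
    have hall : ∀ s, ρref - ρ (T + s) = 0 := by
      intro s
      induction s with
      | zero => simpa using hT
      | succ n ih =>
        show ρref - ρ (T + n + 1) = 0
        rw [hstep (T + n), ih, Real.sign_zero]
        ring
    obtain ⟨t, ht, hcr⟩ := hcross T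
    obtain ⟨s, rfl⟩ := Nat.exists_eq_add_of_le ht
    apply hcr
    have h1 : ρref - ρ (T + s + 1) = 0 := hall (s + 1)
    have h2 : ρref - ρ (T + s) = 0 := hall s
    rw [h1, h2]
  have habs : ∀ t, |ρref - ρ (t + 1)| = abs (|ρref - ρ t| - lam t) := by
    intro t
    rw [hstep t]
    exact abs_step_aux _ _ (hne t)
  have hciff : ∀ t,
      (Real.sign (ρref - ρ (t + 1)) ≠ Real.sign (ρref - ρ t)) ↔
        |ρref - ρ t| < lam t := by
    intro t
    rw [hstep t]
    exact cross_iff_aux _ _ (hne t) (by rw [← hstep t]; exact hne (t + 1))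
  have hlam_cross : ∀ t, |ρref - ρ t| < lam t → lam (t + 1) = lam t / 2 := by
    intro t h
    rw [hlam t, if_pos ((hciff t).mpr h)]
  have hlam_no : ∀ t, ¬ |ρref - ρ t| < lam t → lam (t + 1) = μ * lam t := by
    intro t h
    rw [hlam t, if_neg (fun hc => h ((hciff t).mp hc))]
  obtain ⟨T, -, hcrT⟩ := hcross 0
  have hTlt : |ρref - ρ T| < lam T := (hciff T).mp hcrT
  set N := T + 1 with hN
  have inv : ∀ s, |ρref - ρ (N + s)| ≤ 2 * lam (N + s) := by
    intro s
    induction s with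
    | zero =>
      show |ρref - ρ (T + 1)| ≤ 2 * lam (T + 1)
      have h1 : |ρref - ρ (T + 1)| = lam T - |ρref - ρ T| := by
        rw [habs T, abs_of_neg (by linarith : |ρref - ρ T| - lam T < 0)]
        ring
      have h2 := hlam_cross T hTlt
      have h3 := abs_nonneg (ρref - ρ T)
      rw [h1, h2]
      linarith
    | succ n ih =>
      show |ρref - ρ (N + n + 1)| ≤ 2 * lam (N + n + 1)
      by_cases hc : |ρref - ρ (N + n)| < lam (N + n)
      · have h1 : |ρref - ρ (N + n + 1)| = lam (N + n) - |ρref - ρ (N + n)| := by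
          rw [habs (N + n), abs_of_neg (by linarith)]
          ring
        have h2 := hlam_cross (N + n) hc
        have h3 := abs_nonneg (ρref - ρ (N + n))
        rw [h1, h2]
        linarith
      · push_neg at hc
        have h1 : |ρref - ρ (N + n + 1)| = |ρref - ρ (N + n)| - lam (N + n) := by
          rw [habs (N + n), abs_of_nonneg (by linarith)]
        have h2 := hlam_no (N + n) (not_lt.mpr hc)
        have h3 := lam_pos (N + n)
        rw [h1, h2]
        nlinarith
  have decay : ∀ s, lam (N + s + 2) ≤ μ / 2 * lam (N + s) := by
    intro s
    have hp := lam_pos (N + s)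
    by_cases hc : |ρref - ρ (N + s)| < lam (N + s)
    · have h2 := hlam_cross (N + s) hc
      by_cases hc2 : |ρref - ρ (N + s + 1)| < lam (N + s + 1)
      · have h4 := hlam_cross (N + s + 1) hc2
        show lam (N + s + 1 + 1) ≤ μ / 2 * lam (N + s)
        rw [h4, h2]
        nlinarith
      · have h4 := hlam_no (N + s + 1) hc2
        show lam (N + s + 1 + 1) ≤ μ / 2 * lam (N + s)
        rw [h4, h2]
        apply le_of_eq
        ring
    · push_neg at hc
      have h2 := hlam_no (N + s) (not_lt.mpr hc)
      have hinv := inv s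
      have h1 : |ρref - ρ (N + s + 1)| = |ρref - ρ (N + s)| - lam (N + s) := by
        rw [habs (N + s), abs_of_nonneg (by linarith)]
      have hle : |ρref - ρ (N + s + 1)| ≤ lam (N + s + 1) := by
        rw [h1, h2]
        nlinarith
      have hlt : |ρref - ρ (N + s + 1)| < lam (N + s + 1) := by
        rcases hle.lt_or_eq with h | h
        · exact h
        · exfalso
          have h5 := habs (N + s + 1)
          rw [h, sub_self, abs_zero, abs_eq_zero] at h5
          exact hne (N + s + 1 + 1) h5
      have h4 := hlam_cross (N + s + 1) hlt
      show lam (N + s + 1 + 1) ≤ μ / 2 * lam (N + s)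
      rw [h4, h2]
      apply le_of_eq
      ring
  set C := max (lam N) (lam (N + 1)) with hC
  have hr0 : (0:ℝ) ≤ μ / 2 := by linarith
  have hr1 : μ / 2 < 1 := by linarith
  have hC0 : 0 ≤ C := le_trans (lam_pos N).le (le_max_left _ _)
  have hbound : ∀ k, lam (N + k) ≤ (μ / 2) ^ (k / 2) * C := by
    intro k
    induction k using Nat.strong_induction_on with
    | _ k ih =>
      match k with
      | 0 =>
        show lam (N + 0) ≤ (μ / 2) ^ (0 / 2) * C
        norm_num
        exact le_max_left _ _
      | 1 =>
        show lam (N + 1) ≤ (μ / 2) ^ (1 / 2) * C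
        norm_num
        exact le_max_right _ _
      | (m + 2) =>
        have h1 := decay m
        have h2 := ih m (by omega)
        have h3 : (m + 2) / 2 = m / 2 + 1 := by omega
        rw [h3, pow_succ]
        calc lam (N + (m + 2)) = lam (N + m + 2) := rfl
          _ ≤ μ / 2 * lam (N + m) := h1
          _ ≤ μ / 2 * ((μ / 2) ^ (m / 2) * C) :=
              mul_le_mul_of_nonneg_left h2 hr0
          _ = (μ / 2) ^ (m / 2) * (μ / 2) * C := by ring
  have hdiv : Tendsto (fun k : ℕ => k / 2) atTop atTop := by
    apply tendsto_atTop_atTop.mpr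
    intro b
    exact ⟨2 * b, fun a ha => by omega⟩
  have hpow : Tendsto (fun n : ℕ => (μ / 2) ^ n) atTop (nhds 0) :=
    tendsto_pow_atTop_nhds_zero_of_lt_one hr0 hr1
  have hg : Tendsto (fun k : ℕ => (μ / 2) ^ (k / 2) * C) atTop (nhds 0) := by
    have := (hpow.comp hdiv).mul_const C
    simpa using this
  have hlamN : Tendsto (fun k => lam (N + k)) atTop (nhds 0) :=
    squeeze_zero (fun k => (lam_pos _).le) hbound hg
  have hlamT : Tendsto lam atTop (nhds 0) := by
    rw [← tendsto_add_atTop_iff_nat N]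
    have heq : (fun n => lam (n + N)) = fun k => lam (N + k) := by
      funext k; rw [Nat.add_comm]
    rw [heq]
    exact hlamN
  refine ⟨hlamT, ?_⟩
  rw [tendsto_iff_dist_tendsto_zero]
  have hg2 : Tendsto (fun t => 2 * lam t) atTop (nhds 0) := by
    simpa using hlamT.const_mul 2
  apply squeeze_zero' (Eventually.of_forall fun t => dist_nonneg) _ hg2
  rw [eventually_atTop]
  refine ⟨N, fun t ht => ?_⟩
  obtain ⟨s, rfl⟩ := Nat.exists_eq_add_of_le ht
  have h := inv s
  rw [Real.dist_eq, abs_sub_comm]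
  exact h
end
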